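/- Auxiliary bound for the coefficient lemma: |B̃_m^j| ≤ 2^j √(2j+1) for all j ∈ ℕ₀ and 0 ≤ m ≤ j. -/

import Mathlib

/-!
Each row is controlled by the two rows before it. In the recurrence for row `j + 1`, the first
coefficient times `√(2j - 1)` is exactly `√(2j + 3)`, the second times `√(2j + 1)` is at most
`√(2j + 3)`, and the powers of `(j - 1)/(j + 1)` and `j/(j + 1)` are at most `1`. So the bound
`2^j √(2j + 1)` on rows `j - 1` and `j` gives `(2^(j-1) + 2^j) √(2j + 3) ≤ 2^(j+1) √(2j + 3)`
on row `j + 1`.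
-/

/-- The recurrence defining the normalized coefficients `B̃_m^j`
(indexing: `X j m` means `B̃_m^j`). -/
def BtildeRec (X : ℕ → ℕ → ℝ) : Prop :=
  X 0 0 = 1 ∧ X 1 0 = Real.sqrt 3 ∧ X 1 1 = -(Real.sqrt 3 / 2) ∧
  ∀ j : ℕ, 1 ≤ j →
    (X (j+1) 0 = Real.sqrt ((2*(j:ℝ)+3)/(2*(j:ℝ)-1)) * X (j-1) 0) ∧
    (∀ m : ℕ, 1 ≤ m → m ≤ j - 1 →
      X (j+1) m
        = Real.sqrt ((2*(j:ℝ)+3)/(2*(j:ℝ)-1)) * (((j:ℝ)-1)/((j:ℝ)+1))^m * X (j-1) m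
          - Real.sqrt ((2*(j:ℝ)+1)*(2*(j:ℝ)+3)/((2*(j:ℝ)+2)^2)) *
              ((j:ℝ)/((j:ℝ)+1))^(m-1) * X j (m-1)) ∧
    (X (j+1) j
      = -(Real.sqrt ((2*(j:ℝ)+1)*(2*(j:ℝ)+3)/((2*(j:ℝ)+2)^2)) *
          ((j:ℝ)/((j:ℝ)+1))^(j-1) * X j (j-1))) ∧
    (X (j+1) (j+1)
      = -(Real.sqrt ((2*(j:ℝ)+1)*(2*(j:ℝ)+3)/((2*(j:ℝ)+2)^2)) *
          ((j:ℝ)/((j:ℝ)+1))^j * X j j))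

open Real

lemma abs_sqrt_div_mul_le {j C x : ℝ} (hj : 0 < 2 * j - 1) (hx : |x| ≤ C * √(2 * j - 1)) :
    |√((2 * j + 3) / (2 * j - 1)) * x| ≤ C * √(2 * j + 3) := by
  have hcoeff : √((2 * j + 3) / (2 * j - 1)) * √(2 * j - 1) = √(2 * j + 3) := by
    rw [← sqrt_mul (div_nonneg (by linarith) hj.le), div_mul_cancel₀ _ hj.ne']
  calc |√((2 * j + 3) / (2 * j - 1)) * x| = √((2 * j + 3) / (2 * j - 1)) * |x| := by
        rw [abs_mul, abs_of_nonneg (sqrt_nonneg _)]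
    _ ≤ √((2 * j + 3) / (2 * j - 1)) * (C * √(2 * j - 1)) :=
        mul_le_mul_of_nonneg_left hx (sqrt_nonneg _)
    _ = C * √(2 * j + 3) := by rw [← hcoeff]; ring

lemma abs_sqrt_mul_div_sq_mul_le {j C x : ℝ} (hj : 0 ≤ 2 * j + 1) (hC : 0 ≤ C)
    (hx : |x| ≤ C * √(2 * j + 1)) :
    |√((2 * j + 1) * (2 * j + 3) / (2 * j + 2) ^ 2) * x| ≤ C * √(2 * j + 3) := by
  have hcoeff : √((2 * j + 1) * (2 * j + 3) / (2 * j + 2) ^ 2) * √(2 * j + 1)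
      ≤ √(2 * j + 3) := by
    have hden : 0 < (2 * j + 2) ^ 2 := pow_pos (by linarith) 2
    rw [← sqrt_mul (div_nonneg (by nlinarith) hden.le)]
    refine sqrt_le_sqrt ?_
    rw [div_mul_eq_mul_div, div_le_iff₀ hden]
    nlinarith
  calc |√((2 * j + 1) * (2 * j + 3) / (2 * j + 2) ^ 2) * x|
      = √((2 * j + 1) * (2 * j + 3) / (2 * j + 2) ^ 2) * |x| := by
        rw [abs_mul, abs_of_nonneg (sqrt_nonneg _)]
    _ ≤ √((2 * j + 1) * (2 * j + 3) / (2 * j + 2) ^ 2) * (C * √(2 * j + 1)) :=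
        mul_le_mul_of_nonneg_left hx (sqrt_nonneg _)
    _ = C * (√((2 * j + 1) * (2 * j + 3) / (2 * j + 2) ^ 2) * √(2 * j + 1)) := by ring
    _ ≤ C * √(2 * j + 3) := mul_le_mul_of_nonneg_left hcoeff hC

lemma abs_pow_mul_le {r x B : ℝ} (hr₀ : 0 ≤ r) (hr₁ : r ≤ 1) (k : ℕ) (hx : |x| ≤ B) :
    |r ^ k * x| ≤ B := by
  rw [abs_mul, abs_pow, abs_of_nonneg hr₀]
  exact (mul_le_of_le_one_left (abs_nonneg x) (pow_le_one₀ hr₀ hr₁)).trans hx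

def BtildeRowBounded (X : ℕ → ℕ → ℝ) (j : ℕ) : Prop :=
  ∀ m ≤ j, |X j m| ≤ 2 ^ j * √(2 * (j : ℝ) + 1)

lemma BtildeRec.rowBounded_zero {X : ℕ → ℕ → ℝ} (hX : BtildeRec X) : BtildeRowBounded X 0 := by
  intro m hm
  obtain rfl := Nat.le_zero.mp hm
  simp [hX.1]

lemma BtildeRec.rowBounded_one {X : ℕ → ℕ → ℝ} (hX : BtildeRec X) : BtildeRowBounded X 1 := by
  have h3 : √3 ≤ 2 * √3 := by linarith [sqrt_nonneg 3]
  intro m hm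
  obtain rfl | rfl : m = 0 ∨ m = 1 := by omega
  · norm_num [hX.2.1, abs_of_nonneg (sqrt_nonneg 3), h3]
  · norm_num [hX.2.2.1, abs_div, abs_of_nonneg (sqrt_nonneg 3)]
    linarith

lemma BtildeRec.rowBounded_add_two {X : ℕ → ℕ → ℝ} (hX : BtildeRec X) {n : ℕ}
    (h₀ : BtildeRowBounded X n) (h₁ : BtildeRowBounded X (n + 1)) :
    BtildeRowBounded X (n + 2) := by
  obtain ⟨r₀, r_mid, r_sub, r_diag⟩ := hX.2.2.2 (n + 1) (Nat.le_add_left 1 n)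
  simp only [Nat.add_sub_cancel] at r₀ r_mid r_sub
  set J : ℝ := ((n + 1 : ℕ) : ℝ) with hJ
  set S := √(2 * J + 3)
  have hJ₁ : 1 ≤ J := by simp [hJ]
  have hA : ∀ m ≤ n, ∀ k : ℕ,
      |√((2 * J + 3) / (2 * J - 1)) * (((J - 1) / (J + 1)) ^ k * X n m)| ≤ 2 ^ n * S := by
    intro m hm k
    refine abs_sqrt_div_mul_le (by linarith) (abs_pow_mul_le (by positivity) ?_ k ?_)
    · rw [div_le_one (by linarith)]; linarith
    · convert h₀ m hm using 4; push_cast [hJ]; ring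
  have hB : ∀ m ≤ n + 1, ∀ k : ℕ,
      |√((2 * J + 1) * (2 * J + 3) / (2 * J + 2) ^ 2) * ((J / (J + 1)) ^ k * X (n + 1) m)|
        ≤ 2 ^ (n + 1) * S := by
    intro m hm k
    refine abs_sqrt_mul_div_sq_mul_le (by linarith) (by positivity)
      (abs_pow_mul_le (by positivity) ?_ k (h₁ m hm))
    rw [div_le_one (by linarith)]; linarith
  have hS : √(2 * ((n + 2 : ℕ) : ℝ) + 1) = S := by congr 1; push_cast [hJ]; ring
  intro m hm
  rw [hS]
  suffices |X (n + 2) m| ≤ 2 ^ n * S + 2 ^ (n + 1) * S by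
    rw [← add_mul] at this
    refine this.trans (mul_le_mul_of_nonneg_right ?_ (sqrt_nonneg _))
    rw [pow_succ, pow_succ, pow_succ]; nlinarith [pow_pos (two_pos (α := ℝ)) n]
  have hS₀ : 0 ≤ 2 ^ n * S := by positivity
  have hS₁ : 0 ≤ 2 ^ (n + 1) * S := by positivity
  rcases Nat.lt_or_ge m (n + 1) with hlt | hge
  · rcases Nat.eq_zero_or_pos m with rfl | hpos
    · rw [r₀]
      simpa using (hA 0 (Nat.zero_le n) 0).trans (le_add_of_nonneg_right hS₁)
    · rw [r_mid m hpos (by omega), mul_assoc, mul_assoc]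
      exact (abs_sub _ _).trans (add_le_add (hA m (by omega) m) (hB (m - 1) (by omega) (m - 1)))
  · obtain rfl | rfl : m = n + 1 ∨ m = n + 2 := by omega
    · rw [r_sub, abs_neg, mul_assoc]
      exact (hB n (by omega) n).trans (le_add_of_nonneg_left hS₀)
    · rw [r_diag, abs_neg, mul_assoc]
      exact (hB (n + 1) le_rfl (n + 1)).trans (le_add_of_nonneg_left hS₀)

theorem Btilde_bound (X : ℕ → ℕ → ℝ) (hX : BtildeRec X) :
    ∀ j : ℕ, ∀ m : ℕ, m ≤ j → |X j m| ≤ 2^j * Real.sqrt (2*(j:ℝ)+1) := by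
  intro j
  induction j using Nat.twoStepInduction with
  | zero => exact hX.rowBounded_zero
  | one => exact hX.rowBounded_one
  | more n h₀ h₁ => exact hX.rowBounded_add_two h₀ h₁
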